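/- Classical dilogarithm identity of type A₂ (second unsigned form): for all real y₁ > 0 and y₂ > 0, L(1/(1+y₁)) + L(1/(1+y₂+y₁y₂)) + L(y₁/(1+y₁+y₂+y₁y₂)) + L(y₁y₂/(1+y₂+y₁y₂)) + L(y₂/(1+y₂)) = π²/3. -/

import Mathlib

/-!
Fix `p = y₁` and view the five-term sum as a function of `t = y₂ ≥ 0`. Since
`L'(x) = -½ (log(1-x)/x + log x/(1-x))`, and each argument `x` as well as `1 - x` is a product of
powers of `t`, `1 + t`, `1 + t + pt` and constants, the derivative of the sum is a combination of
these logarithms whose coefficients cancel. So the sum is constant on `[0, ∞)`; at `t = 0` it is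
`L(1/(1+p)) + L(1) + L(p/(1+p)) = 2 L(1)` by the reflection `L(x) + L(1-x) = L(1)`, and
`L(1) = π²/6` because `∫₀¹ log(1-y)/y dy = -ζ(2)`, integrating the series of `log(1-y)`
termwise.
-/

open Real

/-- The Rogers dilogarithm, defined for `0 ≤ x ≤ 1` by
`L(x) = -(1/2) ∫₀ˣ (log(1-y)/y + log(y)/(1-y)) dy`. -/
noncomputable def rogersL (x : ℝ) : ℝ :=
  -(1 / 2) * ∫ y in (0:ℝ)..x, (Real.log (1 - y) / y + Real.log y / (1 - y))

open MeasureTheory Set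

section OrderedField

variable {α : Type*} [Field α] [LinearOrder α] [IsStrictOrderedRing α] {a b : α}

lemma div_mem_Ioo_zero_one (ha : 0 < a) (hab : a < b) : a / b ∈ Ioo (0:α) 1 :=
  ⟨div_pos ha (ha.trans hab), (div_lt_one (ha.trans hab)).mpr hab⟩

lemma div_mem_Icc_zero_one (ha : 0 ≤ a) (hb : 0 < b) (hab : a ≤ b) : a / b ∈ Icc (0:α) 1 :=
  ⟨div_nonneg ha hb.le, (div_le_one hb).mpr hab⟩

end OrderedField

lemma hasSum_one_div_nat_add_one_sq :
    HasSum (fun n : ℕ => 1 / ((n : ℝ) + 1) ^ 2) (π ^ 2 / 6) := by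
  simpa using (hasSum_nat_add_iff' 1).mpr hasSum_zeta_two

lemma hasSum_pow_div_nat_add_one {y : ℝ} (hy : y ∈ Ioo (0:ℝ) 1) :
    HasSum (fun n : ℕ => y ^ n / (n + 1)) (-(log (1 - y) / y)) := by
  have h := (hasSum_pow_div_log_of_abs_lt_one
    (abs_lt.mpr ⟨by linarith [hy.1], hy.2⟩)).div_const y
  rw [← neg_div]
  refine h.congr_fun fun n => ?_
  rw [pow_succ, mul_div_right_comm, mul_div_cancel_right₀ _ hy.1.ne']

lemma integral_pow_div_nat_add_one (n : ℕ) :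
    ∫ y in Ioo (0:ℝ) 1, y ^ n / (n + 1) = 1 / ((n : ℝ) + 1) ^ 2 := by
  rw [← integral_Ioc_eq_integral_Ioo, ← intervalIntegral.integral_of_le zero_le_one,
    intervalIntegral.integral_div, integral_pow]
  field_simp
  simp

lemma integral_log_one_sub_div :
    ∫ y in (0:ℝ)..1, log (1 - y) / y = -(π ^ 2 / 6) := by
  have hint (n : ℕ) : IntegrableOn (fun y : ℝ => y ^ n / (n + 1)) (Ioo 0 1) :=
    (continuous_pow n |>.div_const _).integrableOn_Icc.mono_set Ioo_subset_Icc_self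
  have hnorm (n : ℕ) :
      ∫ y in Ioo (0:ℝ) 1, ‖y ^ n / (n + 1)‖ = 1 / ((n : ℝ) + 1) ^ 2 := by
    rw [← integral_pow_div_nat_add_one n]
    refine setIntegral_congr_fun measurableSet_Ioo fun y hy => ?_
    exact Real.norm_of_nonneg (div_nonneg (pow_nonneg hy.1.le n) (by positivity))
  have hseries := integral_tsum_of_summable_integral_norm hint
    (by simpa only [hnorm] using hasSum_one_div_nat_add_one_sq.summable)
  simp only [integral_pow_div_nat_add_one, hasSum_one_div_nat_add_one_sq.tsum_eq] at hseries
  rw [intervalIntegral.integral_of_le zero_le_one, integral_Ioc_eq_integral_Ioo,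
    ← neg_neg (∫ y in Ioo 0 1, _), ← integral_neg, hseries]
  congr 1
  exact setIntegral_congr_fun measurableSet_Ioo fun y hy =>
    (hasSum_pow_div_nat_add_one hy).tsum_eq.symm

lemma intervalIntegrable_log_one_sub_div :
    IntervalIntegrable (fun y => log (1 - y) / y) volume 0 1 :=
  intervalIntegral.intervalIntegrable_of_integral_ne_zero <| by
    rw [integral_log_one_sub_div]; simp [pi_ne_zero]

noncomputable def rogersKernel (y : ℝ) : ℝ := log (1 - y) / y + log y / (1 - y)

lemma rogersL_eq_integral_rogersKernel (x : ℝ) :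
    rogersL x = -(1 / 2) * ∫ y in (0:ℝ)..x, rogersKernel y := rfl

lemma rogersKernel_one_sub (y : ℝ) : rogersKernel (1 - y) = rogersKernel y := by
  rw [rogersKernel, rogersKernel, sub_sub_cancel, add_comm]

lemma integral_comp_one_sub_rogersKernel (a b : ℝ) :
    ∫ y in a..b, rogersKernel y = ∫ y in 1 - b..1 - a, rogersKernel y := by
  simp_rw [← intervalIntegral.integral_comp_sub_left, rogersKernel_one_sub]

lemma integral_log_div_one_sub :
    ∫ y in (0:ℝ)..1, log y / (1 - y) = ∫ y in (0:ℝ)..1, log (1 - y) / y := by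
  simpa using intervalIntegral.integral_comp_sub_left (fun y => log (1 - y) / y) (a := 0) (b := 1) 1

lemma intervalIntegrable_log_div_one_sub :
    IntervalIntegrable (fun y => log y / (1 - y)) volume 0 1 := by
  simpa using (intervalIntegrable_log_one_sub_div.comp_sub_left 1).symm

lemma intervalIntegrable_rogersKernel : IntervalIntegrable rogersKernel volume 0 1 :=
  intervalIntegrable_log_one_sub_div.add intervalIntegrable_log_div_one_sub

lemma integral_rogersKernel : ∫ y in (0:ℝ)..1, rogersKernel y = -(π ^ 2 / 3) := by
  change ∫ y in (0:ℝ)..1, (log (1 - y) / y + log y / (1 - y)) = _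
  rw [intervalIntegral.integral_add intervalIntegrable_log_one_sub_div
    intervalIntegrable_log_div_one_sub, integral_log_div_one_sub, integral_log_one_sub_div]
  ring

lemma intervalIntegrable_rogersKernel_of_mem_Icc {a b : ℝ} (ha : a ∈ Icc (0:ℝ) 1)
    (hb : b ∈ Icc (0:ℝ) 1) : IntervalIntegrable rogersKernel volume a b :=
  intervalIntegrable_rogersKernel.mono_set <| uIcc_subset_uIcc (by simpa [uIcc_of_le] using ha)
    (by simpa [uIcc_of_le] using hb)

lemma rogersL_zero : rogersL 0 = 0 := by
  simp [rogersL]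

lemma rogersL_add_rogersL_one_sub {x : ℝ} (hx : x ∈ Icc (0:ℝ) 1) :
    rogersL x + rogersL (1 - x) = π ^ 2 / 6 := by
  have hsplit := intervalIntegral.integral_add_adjacent_intervals
    (intervalIntegrable_rogersKernel_of_mem_Icc (left_mem_Icc.mpr zero_le_one) hx)
    (intervalIntegrable_rogersKernel_of_mem_Icc hx (right_mem_Icc.mpr zero_le_one))
  rw [rogersL_eq_integral_rogersKernel, rogersL_eq_integral_rogersKernel,
    integral_comp_one_sub_rogersKernel 0 (1 - x), sub_sub_cancel, sub_zero]
  linarith [integral_rogersKernel]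

lemma rogersL_one : rogersL 1 = π ^ 2 / 6 := by
  simpa [rogersL_zero] using rogersL_add_rogersL_one_sub (x := 1) (by simp)

lemma continuousOn_rogersL : ContinuousOn rogersL (Icc 0 1) := by
  have h := intervalIntegral.continuousOn_primitive_interval' intervalIntegrable_rogersKernel
    left_mem_uIcc
  rw [uIcc_of_le zero_le_one] at h
  exact continuousOn_const.mul h

lemma hasDerivAt_rogersL {x : ℝ} (hx : x ∈ Ioo (0:ℝ) 1) :
    HasDerivAt rogersL (-(1 / 2) * rogersKernel x) x := by
  have hcont : ContinuousOn rogersKernel (Ioo 0 1) := fun y ⟨hy0, hy1⟩ => by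
    have hy0 : y ≠ 0 := hy0.ne'
    have hy1 : 1 - y ≠ 0 := sub_ne_zero.mpr hy1.ne'
    unfold rogersKernel
    fun_prop (disch := assumption)
  exact (intervalIntegral.integral_hasDerivAt_right
    (intervalIntegrable_rogersKernel_of_mem_Icc (left_mem_Icc.mpr zero_le_one)
      (Ioo_subset_Icc_self hx))
    (hcont.stronglyMeasurableAtFilter isOpen_Ioo x hx)
    (hcont.continuousAt (isOpen_Ioo.mem_nhds hx))).const_mul _

lemma HasDerivAt.rogersL {f : ℝ → ℝ} {f' t : ℝ} (hf : HasDerivAt f f' t)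
    (hft : f t ∈ Ioo (0:ℝ) 1) :
    HasDerivAt (fun s => rogersL (f s)) (-(1 / 2) * rogersKernel (f t) * f') t :=
  (hasDerivAt_rogersL hft).comp t hf

lemma rogersKernel_div {a b s : ℝ} (ha : 0 < a) (hb : 0 < b) (hs : a + b = s) :
    rogersKernel (a / s) = s * ((log b - log s) / a + (log a - log s) / b) := by
  subst hs
  have hs : a + b ≠ 0 := by positivity
  rw [rogersKernel, show 1 - a / (a + b) = b / (a + b) by field_simp; ring,
    log_div ha.ne' hs, log_div hb.ne' hs]
  field_simp

lemma rogersKernel_mul_deriv_sum_eq_zero {p t : ℝ} (hp : 0 < p) (ht : 0 < t) :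
    rogersKernel (1 / (1 + t + p * t)) * (-(1 + p) / (1 + t + p * t) ^ 2)
      + rogersKernel (p / (1 + p + t + p * t)) * (-(p * (1 + p)) / (1 + p + t + p * t) ^ 2)
      + rogersKernel (p * t / (1 + t + p * t)) * (p / (1 + t + p * t) ^ 2)
      + rogersKernel (t / (1 + t)) * (1 / (1 + t) ^ 2) = 0 := by
  have hA : 0 < 1 + t + p * t := by positivity
  rw [rogersKernel_div (b := (1 + p) * t) one_pos (by positivity) (by ring),
    rogersKernel_div (b := 1 + t + p * t) hp hA (by ring),
    rogersKernel_div (b := 1 + t) (by positivity) (by positivity) (by ring),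
    rogersKernel_div (b := 1) ht one_pos (by ring),
    show 1 + p + t + p * t = (1 + p) * (1 + t) by ring,
    log_mul (by positivity) ht.ne', log_mul (by positivity) (by positivity),
    log_mul hp.ne' ht.ne', log_one]
  field_simp
  ring

noncomputable def rogersSumA2 (p t : ℝ) : ℝ :=
  rogersL (1 / (1 + p)) + rogersL (1 / (1 + t + p * t))
    + rogersL (p / (1 + p + t + p * t))
    + rogersL (p * t / (1 + t + p * t))
    + rogersL (t / (1 + t))

lemma hasDerivAt_rogersSumA2 {p t : ℝ} (hp : 0 < p) (ht : 0 < t) :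
    HasDerivAt (rogersSumA2 p) 0 t := by
  have hA : 0 < 1 + t + p * t := by positivity
  have hB : 0 < 1 + p + t + p * t := by positivity
  have dA : HasDerivAt (fun s => 1 + s + p * s) (1 + p * 1) t :=
    ((hasDerivAt_id' t).const_add 1).add ((hasDerivAt_id' t).const_mul p)
  have dB : HasDerivAt (fun s => 1 + p + s + p * s) (1 + p * 1) t :=
    ((hasDerivAt_id' t).const_add (1 + p)).add ((hasDerivAt_id' t).const_mul p)
  have D2 := ((hasDerivAt_const t (1:ℝ)).div dA hA.ne').rogersL
    (div_mem_Ioo_zero_one one_pos (by nlinarith))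
  have D3 := ((hasDerivAt_const t p).div dB hB.ne').rogersL
    (div_mem_Ioo_zero_one hp (by nlinarith))
  have D4 := (((hasDerivAt_id' t).const_mul p).div dA hA.ne').rogersL
    (div_mem_Ioo_zero_one (by positivity) (by nlinarith))
  have D5 := ((hasDerivAt_id' t).div ((hasDerivAt_id' t).const_add 1) (by positivity)).rogersL
    (div_mem_Ioo_zero_one ht (by linarith))
  refine (((((hasDerivAt_const t (rogersL (1 / (1 + p)))).add D2).add D3).add D4).add
    D5).congr_deriv ?_
  simp only [Pi.div_apply]
  linear_combination (-1 / 2) * rogersKernel_mul_deriv_sum_eq_zero hp ht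

lemma ContinuousOn.rogersL {f : ℝ → ℝ} {s : Set ℝ} (hf : ContinuousOn f s)
    (hfs : MapsTo f s (Icc 0 1)) : ContinuousOn (fun t => rogersL (f t)) s :=
  continuousOn_rogersL.comp hf hfs

lemma continuousOn_rogersSumA2 {p : ℝ} (hp : 0 ≤ p) : ContinuousOn (rogersSumA2 p) (Ici 0) := by
  refine (((continuousOn_const.add ?_).add ?_).add ?_).add ?_ <;>
    refine ContinuousOn.rogersL (by fun_prop (disch := intro t (ht : 0 ≤ t); positivity))
      fun t (ht : 0 ≤ t) => div_mem_Icc_zero_one (by positivity) (by positivity) ?_ <;>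
    nlinarith

lemma rogersSumA2_zero {p : ℝ} (hp : 0 ≤ p) : rogersSumA2 p 0 = π ^ 2 / 3 := by
  have hrefl := rogersL_add_rogersL_one_sub (div_mem_Icc_zero_one zero_le_one (by positivity)
    (by linarith : (1:ℝ) ≤ 1 + p))
  rw [show 1 - 1 / (1 + p) = p / (1 + p) by field_simp; ring] at hrefl
  simp only [rogersSumA2, mul_zero, add_zero, div_one, rogersL_zero, rogersL_one]
  linarith

/-- Classical dilogarithm identity of type `A₂`, second unsigned form. -/
theorem dilogarithm_identity_A2_unsigned_second (y₁ y₂ : ℝ) (h1 : 0 < y₁) (h2 : 0 < y₂) :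
    rogersL (1 / (1 + y₁)) + rogersL (1 / (1 + y₂ + y₁ * y₂))
      + rogersL (y₁ / (1 + y₁ + y₂ + y₁ * y₂))
      + rogersL (y₁ * y₂ / (1 + y₂ + y₁ * y₂))
      + rogersL (y₂ / (1 + y₂)) = π ^ 2 / 3 := by
  obtain ⟨_, _, hslope⟩ := exists_hasDerivAt_eq_slope (rogersSumA2 y₁) (fun _ => 0) h2
    ((continuousOn_rogersSumA2 h1.le).mono Icc_subset_Ici_self)
    fun t ht => hasDerivAt_rogersSumA2 h1 ht.1
  rw [eq_comm, div_eq_zero_iff, sub_eq_zero, sub_zero, rogersSumA2_zero h1.le] at hslope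
  exact hslope.resolve_right h2.ne'
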